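/- arXiv:1905.07751 — 2 statements merged into one kernel-verified Lean document; each statement's English description precedes it below -/
import Mathlib

section
/- Let k ∈ ℤ with k ≠ 0, g₀ ∈ ℂ, and B : (−∞,0] → ℂ continuous and integrable. Define u(x) = C₁ e^{|k|x} + C₂ e^{−|k|x} − ∫_0^x (B(y)/(2|k|)) [e^{|k|(y−x)} − e^{|k|(x−y)}] dy, where C₂ = −(1/(2|k|)) ∫_{−∞}^0 B(y) e^{|k|y} dy and C₁ = −C₂ + g₀. Then u'(0) = ∫_{−∞}^0 B(y) e^{|k|y} dy + |k| g₀. -/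
open Complex Filter MeasureTheory

noncomputable section

/-- The explicit solution of `u'' − k²u = B` on `(−∞,0]` with `u(0) = g₀` and
`u' → 0` at `−∞`:
`u(x) = C₁e^{|k|x} + C₂e^{−|k|x} − ∫₀ˣ (B(y)/(2|k|))[e^{|k|(y−x)} − e^{|k|(x−y)}] dy`,
with `C₂ = −(1/(2|k|))∫_{−∞}^0 B(y)e^{|k|y} dy` and `C₁ = −C₂ + g₀`. -/
def uSol (k : ℤ) (g₀ : ℂ) (B : ℝ → ℂ) : ℝ → ℂ := fun x =>
  let κ : ℝ := |(k : ℝ)|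
  let C₂ : ℂ :=
    -(1 / (2 * (κ : ℂ))) * ∫ y in Set.Iic (0 : ℝ), B y * Complex.exp ((κ * y : ℝ))
  let C₁ : ℂ := -C₂ + g₀
  C₁ * Complex.exp ((κ * x : ℝ)) + C₂ * Complex.exp ((-(κ * x) : ℝ))
    - ∫ y in (0 : ℝ)..x,
        (B y / (2 * (κ : ℂ))) *
          (Complex.exp ((κ * (y - x) : ℝ)) - Complex.exp ((κ * (x - y) : ℝ)))

/-- Normal-derivative trace: `u'(0) = ∫_{−∞}^0 B(y)e^{|k|y} dy + |k|g₀`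
(derivative from within `(−∞,0]`). -/
theorem uSol_deriv_at_zero (k : ℤ) (hk : k ≠ 0) (g₀ : ℂ) (B : ℝ → ℂ)
    (hBc : ContinuousOn B (Set.Iic 0)) (hBi : IntegrableOn B (Set.Iic 0)) :
    derivWithin (uSol k g₀ B) (Set.Iic 0) 0
      = (∫ y in Set.Iic (0 : ℝ), B y * Complex.exp (((|(k : ℝ)| * y : ℝ) : ℂ)))
        + ((|(k : ℝ)| : ℝ) : ℂ) * g₀ := by
  set κ : ℝ := |(k : ℝ)| with hκdef
  have hκ : 0 < κ := abs_pos.mpr (by exact_mod_cast hk)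
  have hκC : (2 * (κ : ℂ)) ≠ 0 := by
    simp only [ne_eq, mul_eq_zero, two_ne_zero, false_or, Complex.ofReal_eq_zero]
    exact hκ.ne'
  set I : ℂ := ∫ y in Set.Iic (0 : ℝ), B y * Complex.exp ((κ * y : ℝ)) with hI
  set C₂ : ℂ := -(1 / (2 * (κ : ℂ))) * I with hC2
  set C₁ : ℂ := -C₂ + g₀ with hC1
  set f₁ : ℝ → ℂ := fun y => B y * Complex.exp ((κ : ℂ) * y) with hf1
  set f₂ : ℝ → ℂ := fun y => B y * Complex.exp (-((κ : ℂ) * y)) with hf2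
  set h : ℝ → ℂ := fun x =>
    C₁ * Complex.exp ((κ : ℂ) * x) + C₂ * Complex.exp (-((κ : ℂ) * x))
      - (Complex.exp (-((κ : ℂ) * x)) * (∫ y in (0 : ℝ)..x, f₁ y)
          - Complex.exp ((κ : ℂ) * x) * (∫ y in (0 : ℝ)..x, f₂ y)) / (2 * (κ : ℂ))
    with hh
  -- continuity of the exponential weights
  have hcexp : ∀ c : ℂ, Continuous fun y : ℝ => Complex.exp (c * y) := fun c =>
    Complex.continuous_exp.comp (continuous_const.mul Complex.continuous_ofReal)
  have hcexp' : Continuous fun y : ℝ => Complex.exp (-((κ : ℂ) * y)) := by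
    simpa using hcexp (-(κ : ℂ))
  -- interval integrability of f₁, f₂ on 0..x for x ≤ 0
  have hint : ∀ (c : ℝ → ℂ), Continuous c →
      ∀ x : ℝ, x ≤ 0 → IntervalIntegrable (fun y => B y * c y) volume 0 x := by
    intro c hc x hx
    rw [intervalIntegrable_iff, Set.uIoc_of_ge hx]
    refine (IntegrableOn.mul_continuousOn (hBi.mono_set ?_) hc.continuousOn
      isCompact_Icc).mono_set Set.Ioc_subset_Icc_self
    exact fun y hy => hy.2
  have hint1 : ∀ x : ℝ, x ≤ 0 → IntervalIntegrable f₁ volume 0 x :=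
    fun x hx => hint _ (hcexp (κ : ℂ)) x hx
  have hint2 : ∀ x : ℝ, x ≤ 0 → IntervalIntegrable f₂ volume 0 x :=
    fun x hx => hint _ hcexp' x hx
  -- uSol = h on Iic 0
  have hEq : Set.EqOn (uSol k g₀ B) h (Set.Iic 0) := by
    intro x hx
    simp only [uSol, hh, ← hκdef, ← hI, ← hC2, ← hC1]
    have e1 : ∀ y : ℝ, ((κ * y : ℝ) : ℂ) = (κ : ℂ) * y := by intro y; push_cast; ring
    have e2 : ((-(κ * x) : ℝ) : ℂ) = -((κ : ℂ) * x) := by push_cast; ring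
    rw [e1, e2]
    congr 1
    have hcong : ∀ y ∈ Set.uIcc (0 : ℝ) x,
        (B y / (2 * (κ : ℂ))) *
            (Complex.exp ((κ * (y - x) : ℝ)) - Complex.exp ((κ * (x - y) : ℝ)))
          = (Complex.exp (-((κ : ℂ) * x)) * f₁ y - Complex.exp ((κ : ℂ) * x) * f₂ y)
              / (2 * (κ : ℂ)) := by
      intro y _
      have a1 : ((κ * (y - x) : ℝ) : ℂ) = -((κ : ℂ) * x) + (κ : ℂ) * y := by push_cast; ring
      have a2 : ((κ * (x - y) : ℝ) : ℂ) = (κ : ℂ) * x + -((κ : ℂ) * y) := by push_cast; ring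
      rw [a1, a2, Complex.exp_add, Complex.exp_add]
      simp only [hf1, hf2]
      field_simp
    rw [intervalIntegral.integral_congr hcong]
    rw [intervalIntegral.integral_div,
      intervalIntegral.integral_sub ((hint1 x hx).const_mul _) ((hint2 x hx).const_mul _),
      intervalIntegral.integral_const_mul, intervalIntegral.integral_const_mul]
  -- derivatives of the pieces
  have hidd : HasDerivAt (fun x : ℝ => ((κ : ℂ) * x : ℂ)) (κ : ℂ) 0 := by
    simpa using (Complex.ofRealCLM.hasDerivAt (x := (0 : ℝ))).const_mul (κ : ℂ)
  have he : HasDerivWithinAt (fun x : ℝ => Complex.exp ((κ : ℂ) * x)) (κ : ℂ) (Set.Iic 0) 0 := by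
    have := hidd.cexp
    simpa using this.hasDerivWithinAt
  have hen : HasDerivWithinAt (fun x : ℝ => Complex.exp (-((κ : ℂ) * x))) (-(κ : ℂ))
      (Set.Iic 0) 0 := by
    have := hidd.neg.cexp
    simpa using this.hasDerivWithinAt
  have hmeas : ∀ (c : ℝ → ℂ), Continuous c →
      StronglyMeasurableAtFilter (fun y => B y * c y) (nhdsWithin 0 (Set.Iic 0)) volume :=
    fun c hc => ⟨Set.Iic 0, self_mem_nhdsWithin,
      hBi.aestronglyMeasurable.mul hc.aestronglyMeasurable⟩
  have hcw : ∀ (c : ℝ → ℂ), Continuous c →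
      ContinuousWithinAt (fun y => B y * c y) (Set.Iic 0) 0 :=
    fun c hc => (hBc 0 Set.self_mem_Iic).mul hc.continuousWithinAt
  have hG1 : HasDerivWithinAt (fun x => ∫ y in (0 : ℝ)..x, f₁ y) (f₁ 0) (Set.Iic 0) 0 :=
    intervalIntegral.integral_hasDerivWithinAt_right (hint1 0 le_rfl)
      (hmeas _ (hcexp _)) (hcw _ (hcexp _))
  have hG2 : HasDerivWithinAt (fun x => ∫ y in (0 : ℝ)..x, f₂ y) (f₂ 0) (Set.Iic 0) 0 :=
    intervalIntegral.integral_hasDerivWithinAt_right (hint2 0 le_rfl)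
      (hmeas _ hcexp') (hcw _ hcexp')
  -- derivative of h
  have hDh : HasDerivWithinAt h
      (C₁ * (κ : ℂ) + C₂ * (-(κ : ℂ))
        - ((-(κ : ℂ)) * (∫ y in (0:ℝ)..(0:ℝ), f₁ y)
            + Complex.exp (-((κ : ℂ) * (0:ℝ))) * f₁ 0
            - ((κ : ℂ) * (∫ y in (0:ℝ)..(0:ℝ), f₂ y)
              + Complex.exp ((κ : ℂ) * (0:ℝ)) * f₂ 0)) / (2 * (κ : ℂ)))
      (Set.Iic 0) 0 := by
    exact (((he.const_mul C₁).add (hen.const_mul C₂)).sub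
      (((hen.mul hG1).sub (he.mul hG2)).div_const _))
  have hval : (C₁ * (κ : ℂ) + C₂ * (-(κ : ℂ))
        - ((-(κ : ℂ)) * (∫ y in (0:ℝ)..(0:ℝ), f₁ y)
            + Complex.exp (-((κ : ℂ) * (0:ℝ))) * f₁ 0
            - ((κ : ℂ) * (∫ y in (0:ℝ)..(0:ℝ), f₂ y)
              + Complex.exp ((κ : ℂ) * (0:ℝ)) * f₂ 0)) / (2 * (κ : ℂ)))
      = I + (κ : ℂ) * g₀ := by
    simp only [intervalIntegral.integral_same, hf1, hf2, Complex.ofReal_zero, mul_zero,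
      neg_zero, Complex.exp_zero, one_mul, mul_one, mul_zero, zero_add, sub_self, zero_div]
    rw [hC1, hC2]
    field_simp
    have e : (κ : ℂ) * (κ : ℂ)⁻¹ = 1 := mul_inv_cancel₀ (by exact_mod_cast hκ.ne')
    linear_combination (I + I * ((κ : ℂ) * (κ : ℂ)⁻¹ + 1) + 2 * (κ : ℂ) * g₀) * e
  rw [hval] at hDh
  exact (hDh.congr (fun y hy => hEq hy) (hEq Set.self_mem_Iic)).derivWithin
    (uniqueDiffOn_Iic 0 0 Set.self_mem_Iic)
end
end

section
/- Let k ∈ ℤ with k ≠ 0, g₀ ∈ ℂ, and B : (−∞,0] → ℂ continuous and integrable. Define u(x) = C₁ e^{|k|x} + C₂ e^{−|k|x} − ∫_0^x (B(y)/(2|k|)) [e^{|k|(y−x)} − e^{|k|(x−y)}] dy, where C₂ = −(1/(2|k|)) ∫_{−∞}^0 B(y) e^{|k|y} dy and C₁ = −C₂ + g₀. Then u''(0) = k² g₀ + B(0). -/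
set_option maxHeartbeats 1000000


open Complex Filter MeasureTheory Topology

noncomputable section

/-- FTC within `Iic 0`. -/
lemma ftc_Iic_aux {f : ℝ → ℂ} (hc : ContinuousOn f (Set.Iic 0))
    (hInt : ∀ x : ℝ, x ≤ 0 → IntervalIntegrable f volume 0 x) {x : ℝ} (hx : x ∈ Set.Iic 0) :
    HasDerivWithinAt (fun u => ∫ y in (0:ℝ)..u, f y) (f x) (Set.Iic 0) x := by
  have hx' : x ≤ 0 := hx
  rcases hx'.lt_or_eq with h | h
  · have hmeas : StronglyMeasurableAtFilter f (𝓝 x) :=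
      ⟨Set.Iic 0, Iic_mem_nhds h, hc.aestronglyMeasurable measurableSet_Iic⟩
    have hcx : ContinuousAt f x :=
      (hc x hx).continuousAt (Iic_mem_nhds h)
    exact (intervalIntegral.integral_hasDerivAt_right (hInt x hx) hmeas hcx).hasDerivWithinAt
  · subst h
    have hmeas : StronglyMeasurableAtFilter f (𝓝[Set.Iic (0:ℝ)] 0) :=
      ⟨Set.Iic 0, self_mem_nhdsWithin, hc.aestronglyMeasurable measurableSet_Iic⟩
    exact intervalIntegral.integral_hasDerivWithinAt_right (hInt 0 le_rfl) hmeas (hc 0 hx)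

/-- Second-derivative trace: `u''(0) = k²g₀ + B(0)` (derivatives from within `(−∞,0]`). -/
theorem uSol_second_deriv_at_zero (k : ℤ) (hk : k ≠ 0) (g₀ : ℂ) (B : ℝ → ℂ)
    (hBc : ContinuousOn B (Set.Iic 0)) (hBi : IntegrableOn B (Set.Iic 0)) :
    derivWithin (derivWithin (uSol k g₀ B) (Set.Iic 0)) (Set.Iic 0) 0
      = (k : ℂ) ^ 2 * g₀ + B 0 := by
  set κ : ℝ := |(k : ℝ)| with hκdef
  have hκ : 0 < κ := abs_pos.mpr (by exact_mod_cast hk)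
  have hκC : (κ : ℂ) ≠ 0 := by exact_mod_cast hκ.ne'
  set C₂ : ℂ :=
    -(1 / (2 * (κ : ℂ))) * ∫ y in Set.Iic (0 : ℝ), B y * Complex.exp ((κ * y : ℝ)) with hC₂
  set C₁ : ℂ := -C₂ + g₀ with hC₁
  set c : ℂ := 1 / (2 * (κ : ℂ)) with hc
  set E : ℝ → ℂ := fun x => Complex.exp ((κ * x : ℝ)) with hE
  set E' : ℝ → ℂ := fun x => Complex.exp ((-(κ * x) : ℝ)) with hE'
  set P : ℝ → ℂ := fun x => ∫ y in (0:ℝ)..x, B y * Complex.exp ((κ * y : ℝ)) with hP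
  set Q : ℝ → ℂ := fun x => ∫ y in (0:ℝ)..x, B y * Complex.exp ((-(κ * y) : ℝ)) with hQ
  set v : ℝ → ℂ := fun x => C₁ * E x + C₂ * E' x - c * (E' x * P x) + c * (E x * Q x) with hv
  set v₁ : ℝ → ℂ := fun x =>
    (κ : ℂ) * C₁ * E x - (κ : ℂ) * C₂ * E' x + (κ : ℂ) * c * (E' x * P x)
      + (κ : ℂ) * c * (E x * Q x) with hv₁
  -- derivatives of the exponentials
  have hEd : ∀ x : ℝ, HasDerivAt E ((κ : ℂ) * E x) x := by
    intro x
    have h1 : HasDerivAt (fun t : ℝ => ((κ * t : ℝ) : ℂ)) ((κ : ℝ) : ℂ) x := by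
      simpa using ((hasDerivAt_id x).const_mul κ).ofReal_comp
    simpa [hE, mul_comm] using h1.cexp
  have hE'd : ∀ x : ℝ, HasDerivAt E' (-(κ : ℂ) * E' x) x := by
    intro x
    have h1 : HasDerivAt (fun t : ℝ => ((-(κ * t) : ℝ) : ℂ)) ((-κ : ℝ) : ℂ) x := by
      simpa using (((hasDerivAt_id x).const_mul κ).neg).ofReal_comp
    have := h1.cexp
    push_cast at this
    simpa [hE', mul_comm] using this
  -- integrability of the integrands
  have hI : ∀ (f : ℝ → ℂ), Continuous f → ∀ x : ℝ, x ≤ 0 →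
      IntervalIntegrable (fun y => B y * f y) volume 0 x := by
    intro f hf x hx
    have h1 : IntegrableOn B (Set.Icc x 0) := hBi.mono_set Set.Icc_subset_Iic_self
    have h2 : IntegrableOn (fun y => B y * f y) (Set.Icc x 0) :=
      h1.mul_continuousOn hf.continuousOn isCompact_Icc
    have h3 : Set.uIcc (0:ℝ) x = Set.Icc x 0 := by
      rw [Set.uIcc_comm, Set.uIcc_of_le hx]
    have h4 : IntegrableOn (fun y => B y * f y) (Set.uIcc (0:ℝ) x) := by rw [h3]; exact h2
    exact h4.intervalIntegrable
  have hIexp : ∀ x : ℝ, x ≤ 0 →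
      IntervalIntegrable (fun y => B y * Complex.exp ((κ * y : ℝ))) volume 0 x :=
    hI _ (by continuity)
  have hIexp' : ∀ x : ℝ, x ≤ 0 →
      IntervalIntegrable (fun y => B y * Complex.exp ((-(κ * y) : ℝ))) volume 0 x :=
    hI _ (by continuity)
  -- FTC derivatives of P and Q
  have hPc : ContinuousOn (fun y => B y * Complex.exp ((κ * y : ℝ))) (Set.Iic 0) :=
    hBc.mul (by continuity : Continuous fun y : ℝ => Complex.exp ((κ * y : ℝ))).continuousOn
  have hQc : ContinuousOn (fun y => B y * Complex.exp ((-(κ * y) : ℝ))) (Set.Iic 0) :=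
    hBc.mul (by continuity : Continuous fun y : ℝ => Complex.exp ((-(κ * y) : ℝ))).continuousOn
  have hPd : ∀ x ∈ Set.Iic (0:ℝ), HasDerivWithinAt P (B x * E x) (Set.Iic 0) x := fun x hx =>
    ftc_Iic_aux hPc hIexp hx
  have hQd : ∀ x ∈ Set.Iic (0:ℝ), HasDerivWithinAt Q (B x * E' x) (Set.Iic 0) x := fun x hx =>
    ftc_Iic_aux hQc hIexp' hx
  -- Step A : uSol = v on Iic 0
  have hEq : Set.EqOn (uSol k g₀ B) v (Set.Iic 0) := by
    intro x hx
    have hint : (∫ y in (0:ℝ)..x,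
        (B y / (2 * (κ : ℂ))) *
          (Complex.exp ((κ * (y - x) : ℝ)) - Complex.exp ((κ * (x - y) : ℝ))))
        = c * (E' x * P x) - c * (E x * Q x) := by
      have h1 : c * (E' x * P x)
          = ∫ y in (0:ℝ)..x, c * E' x * (B y * Complex.exp ((κ * y : ℝ))) := by
        simp only [hP, intervalIntegral.integral_const_mul]; ring
      have h2 : c * (E x * Q x)
          = ∫ y in (0:ℝ)..x, c * E x * (B y * Complex.exp ((-(κ * y) : ℝ))) := by
        simp only [hQ, intervalIntegral.integral_const_mul]; ring
      rw [h1, h2, ← intervalIntegral.integral_sub ((hIexp x hx).const_mul _)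
        ((hIexp' x hx).const_mul _)]
      apply intervalIntegral.integral_congr
      intro y _
      have e1 : Complex.exp ((κ * (y - x) : ℝ))
          = Complex.exp ((κ * y : ℝ)) * Complex.exp ((-(κ * x) : ℝ)) := by
        rw [← Complex.exp_add]
        congr 1
        push_cast
        ring
      have e2 : Complex.exp ((κ * (x - y) : ℝ))
          = Complex.exp ((κ * x : ℝ)) * Complex.exp ((-(κ * y) : ℝ)) := by
        rw [← Complex.exp_add]
        congr 1
        push_cast
        ring
      simp only [e1, e2, hE, hE', hc]
      field_simp
    show uSol k g₀ B x = _
    rw [uSol]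
    simp only [← hκdef, ← hC₂, ← hC₁, hint, hv, ← hE, ← hE']
    ring
  -- Step B : derivWithin v = v₁ on Iic 0
  have hvd : ∀ x ∈ Set.Iic (0:ℝ), HasDerivWithinAt v (v₁ x) (Set.Iic 0) x := by
    intro x hx
    have h1 := ((hEd x).hasDerivWithinAt (s := Set.Iic 0)).const_mul C₁
    have h2 := ((hE'd x).hasDerivWithinAt (s := Set.Iic 0)).const_mul C₂
    have h3 := (((hE'd x).hasDerivWithinAt (s := Set.Iic 0)).mul (hPd x hx)).const_mul c
    have h4 := (((hEd x).hasDerivWithinAt (s := Set.Iic 0)).mul (hQd x hx)).const_mul c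
    have h := ((h1.add h2).sub h3).add h4
    refine h.congr_deriv ?_
    simp only [hv₁]
    ring
  have hdv : Set.EqOn (derivWithin (uSol k g₀ B) (Set.Iic 0)) v₁ (Set.Iic 0) := by
    intro x hx
    rw [derivWithin_congr hEq (hEq hx)]
    exact (hvd x hx).derivWithin (uniqueDiffOn_Iic 0 x hx)
  -- Step C : derivative of v₁ at 0
  have hv₁d : HasDerivWithinAt v₁ ((κ:ℂ)^2 * g₀ + B 0) (Set.Iic 0) 0 := by
    have h1 := ((hEd 0).hasDerivWithinAt (s := Set.Iic 0)).const_mul ((κ:ℂ) * C₁)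
    have h2 := ((hE'd 0).hasDerivWithinAt (s := Set.Iic 0)).const_mul ((κ:ℂ) * C₂)
    have h3 := (((hE'd 0).hasDerivWithinAt (s := Set.Iic 0)).mul
      (hPd 0 Set.self_mem_Iic)).const_mul ((κ:ℂ) * c)
    have h4 := (((hEd 0).hasDerivWithinAt (s := Set.Iic 0)).mul
      (hQd 0 Set.self_mem_Iic)).const_mul ((κ:ℂ) * c)
    have h := ((h1.sub h2).add h3).add h4
    refine h.congr_deriv ?_
    have hE0 : E 0 = 1 := by simp [hE]
    have hE'0 : E' 0 = 1 := by simp [hE']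
    have hP0 : P 0 = 0 := by simp [hP]
    have hQ0 : Q 0 = 0 := by simp [hQ]
    rw [hE0, hE'0, hP0, hQ0, hC₁, hc]
    field_simp
    ring
  rw [derivWithin_congr hdv (hdv Set.self_mem_Iic), hv₁d.derivWithin (uniqueDiffOn_Iic 0 0 Set.self_mem_Iic)]
  have h2 : ((κ:ℝ):ℂ)^2 = (((κ^2 : ℝ)):ℂ) := by push_cast; ring
  rw [h2, hκdef, _root_.sq_abs]
  push_cast
  ring
end
end
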